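/- (Boundedness of trajectories.) Under the setup of the constant-of-motion result — a graphical constant-sum game with a fully mixed Nash equilibrium x̂*, each agent i using a convex combination of FTRL dynamics with strictly convex continuous regularizers h_{i1},…,h_{iℓ_i} and weights α_{iℓ} > 0 summing to 1, and continuous trajectories satisfying q_i(t) = q_i(0) + ∫₀ᵗ ∑_{k≠i} A^{ik} x_k(τ) dτ and x_i(t) = ∑_ℓ α_{iℓ} · argmax_{x ∈ Δ^{n_i}} (⟨q_i(t), x⟩ − h_{iℓ}(x)) — the reduced state stays bounded: there exists R > 0 such that for every t ≥ 0 and every agent i, the vector q'_i(t) := (q_{i,1}(t) − q_{i,n_i}(t), …, q_{i,n_i−1}(t) − q_{i,n_i}(t)) ∈ ℝ^{n_i − 1} satisfies ‖q'_i(t)‖ ≤ R. -/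
import Mathlib


open scoped BigOperators
open MeasureTheory

noncomputable section

/-- The standard probability simplex in ℝᵈ. -/
def simplex (d : ℕ) : Set (Fin d → ℝ) := {x | (∀ j, 0 ≤ x j) ∧ ∑ j, x j = 1}

/-- Euclidean inner product on ℝᵈ. -/
def dot {d : ℕ} (a b : Fin d → ℝ) : ℝ := ∑ j, a j * b j

/-- Agent i's payoff vector in a graphical game: pᵢ(x̂) = ∑_{k ≠ i} A^{ik} x_k. -/
def payoff {m : ℕ} {n : Fin m → ℕ}
    (A : (i k : Fin m) → Matrix (Fin (n i)) (Fin (n k)) ℝ)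
    (x : (k : Fin m) → Fin (n k) → ℝ) (i : Fin m) : Fin (n i) → ℝ :=
  ∑ k ∈ Finset.univ.erase i, (A i k).mulVec (x k)

/- STATEMENT 19 (boundedness of trajectories): in a graphical constant-sum game with a
fully mixed Nash equilibrium, with each agent i (having n i + 1 actions) using a convex
combination of FTRL dynamics with strictly positive weights, the reduced state
q'ᵢ(t) = (qᵢ,₁(t) − qᵢ,ₙᵢ(t), …) stays bounded in Euclidean norm, uniformly in t ≥ 0. -/

namespace S19

def single (d : ℕ) (j : Fin d) : Fin d → ℝ := fun l => if l = j then 1 else 0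

lemma single_mem (d : ℕ) (j : Fin d) : single d j ∈ simplex d := by
  refine ⟨fun l => ?_, ?_⟩
  · unfold single; split <;> norm_num
  · simp [single]

lemma dot_single {d : ℕ} (a : Fin d → ℝ) (j : Fin d) : dot a (single d j) = a j := by
  simp [dot, single, mul_ite]

lemma single_dot {d : ℕ} (a : Fin d → ℝ) (j : Fin d) : dot (single d j) a = a j := by
  simp [dot, single, ite_mul]

lemma dot_comm {d : ℕ} (a b : Fin d → ℝ) : dot a b = dot b a := by
  simp [dot, mul_comm]

lemma dot_sub_left {d : ℕ} (a b w : Fin d → ℝ) :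
    dot (a - b) w = dot a w - dot b w := by
  simp [dot, Pi.sub_apply, sub_mul, Finset.sum_sub_distrib]

lemma dot_sub_right {d : ℕ} (w a b : Fin d → ℝ) :
    dot w (a - b) = dot w a - dot w b := by
  simp [dot, Pi.sub_apply, mul_sub, Finset.sum_sub_distrib]

lemma dot_sum_smul_right {d : ℕ} {ι : Type*} [Fintype ι] (a : Fin d → ℝ)
    (cc : ι → ℝ) (g : ι → Fin d → ℝ) :
    dot a (∑ ℓ, cc ℓ • g ℓ) = ∑ ℓ, cc ℓ * dot a (g ℓ) := by
  simp only [dot, Finset.sum_apply, Pi.smul_apply, smul_eq_mul, Finset.mul_sum]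
  rw [Finset.sum_comm]
  exact Finset.sum_congr rfl fun ℓ _ => Finset.sum_congr rfl fun j _ => by ring

lemma simplex_coord_le_one {d : ℕ} {z : Fin d → ℝ} (hz : z ∈ simplex d) (j : Fin d) :
    z j ≤ 1 := by
  rw [← hz.2]
  exact Finset.single_le_sum (fun l _ => hz.1 l) (Finset.mem_univ j)

lemma abs_dot_le {d : ℕ} (w z : Fin d → ℝ) (hz : z ∈ simplex d) :
    |dot w z| ≤ ∑ j, |w j| := by
  refine (Finset.abs_sum_le_sum_abs _ _).trans ?_
  refine Finset.sum_le_sum fun j _ => ?_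
  rw [abs_mul]
  calc |w j| * |z j| = |w j| * z j := by rw [abs_of_nonneg (hz.1 j)]
    _ ≤ |w j| * 1 := mul_le_mul_of_nonneg_left (simplex_coord_le_one hz j) (abs_nonneg _)
    _ = |w j| := mul_one _

end S19

open S19

theorem reduced_state_trajectories_bounded
    (m : ℕ) (n : Fin m → ℕ)
    (A : (i k : Fin m) → Matrix (Fin (n i + 1)) (Fin (n k + 1)) ℝ)
    (c : Fin m → Fin m → ℝ) (hcsym : ∀ i k, c i k = c k i)
    (hconst : ∀ i k, i ≠ k → ∀ (j : Fin (n i + 1)) (l : Fin (n k + 1)),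
      A i k j l + A k i l j = c i k)
    (xstar : (i : Fin m) → Fin (n i + 1) → ℝ)
    (hxs : ∀ i, xstar i ∈ simplex (n i + 1))
    (hfull : ∀ i j, 0 < xstar i j)
    (hNE : ∀ i, ∀ y ∈ simplex (n i + 1),
      dot y (payoff (n := fun i => n i + 1) A xstar i) ≤
        dot (xstar i) (payoff (n := fun i => n i + 1) A xstar i))
    (k : Fin m → ℕ)
    (h : (i : Fin m) → Fin (k i) → (Fin (n i + 1) → ℝ) → ℝ)
    (hconv : ∀ i ℓ, StrictConvexOn ℝ (simplex (n i + 1)) (h i ℓ))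
    (hcont : ∀ i ℓ, ContinuousOn (h i ℓ) (simplex (n i + 1)))
    (α : (i : Fin m) → Fin (k i) → ℝ)
    (hα : ∀ i ℓ, 0 < α i ℓ) (hα1 : ∀ i, ∑ ℓ, α i ℓ = 1)
    (f : (i : Fin m) → Fin (k i) → (Fin (n i + 1) → ℝ) → (Fin (n i + 1) → ℝ))
    (hf : ∀ i ℓ q, f i ℓ q ∈ simplex (n i + 1) ∧
      ∀ y ∈ simplex (n i + 1),
        dot q y - h i ℓ y ≤ dot q (f i ℓ q) - h i ℓ (f i ℓ q))
    (q : (i : Fin m) → ℝ → Fin (n i + 1) → ℝ)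
    (x : (i : Fin m) → ℝ → Fin (n i + 1) → ℝ)
    (hqc : ∀ i, Continuous (q i)) (hxc : ∀ i, Continuous (x i))
    (hq : ∀ (i : Fin m) (t : ℝ), 0 ≤ t →
      q i t = q i 0 +
        ∫ τ in (0:ℝ)..t, payoff (n := fun i => n i + 1) A (fun k' => x k' τ) i)
    (hx : ∀ (i : Fin m) (t : ℝ), 0 ≤ t →
      x i t = ∑ ℓ, α i ℓ • f i ℓ (q i t)) :
    ∃ R : ℝ, 0 < R ∧ ∀ (t : ℝ), 0 ≤ t → ∀ i : Fin m,
      Real.sqrt (∑ j : Fin (n i),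
        (q i t j.castSucc - q i t (Fin.last (n i))) ^ 2) ≤ R := by
  classical
  -- the payoff field along the trajectory
  set P : (i : Fin m) → ℝ → Fin (n i + 1) → ℝ :=
    fun i τ => payoff (n := fun i => n i + 1) A (fun k' => x k' τ) i with hPdef
  have hPc : ∀ i, Continuous (P i) := by
    intro i
    refine continuous_pi fun j => ?_
    have e : (fun τ => P i τ j)
        = fun τ => ∑ k' ∈ Finset.univ.erase i, ∑ l, A i k' j l * x k' τ l := by
      funext τ
      simp only [hPdef, payoff, Finset.sum_apply, Matrix.mulVec, dotProduct]
    rw [e]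
    exact continuous_finset_sum _ fun k' _ => continuous_finset_sum _ fun l _ =>
      continuous_const.mul ((continuous_apply l).comp (hxc k'))
  have hPint : ∀ i (a b : ℝ), IntervalIntegrable (P i) volume a b :=
    fun i a b => (hPc i).intervalIntegrable a b
  -- x stays in the simplex
  have hxmem : ∀ (t : ℝ), 0 ≤ t → ∀ i, x i t ∈ simplex (n i + 1) := by
    intro t ht i
    rw [hx i t ht]
    refine ⟨fun j => ?_, ?_⟩
    · rw [Finset.sum_apply]
      refine Finset.sum_nonneg fun ℓ _ => ?_
      have := (hf i ℓ (q i t)).1.1 j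
      simpa using mul_nonneg (hα i ℓ).le this
    · calc ∑ j, (∑ ℓ, α i ℓ • f i ℓ (q i t)) j
          = ∑ j, ∑ ℓ, α i ℓ * f i ℓ (q i t) j := by
            refine Finset.sum_congr rfl fun j _ => ?_
            simp [Finset.sum_apply]
        _ = ∑ ℓ, ∑ j, α i ℓ * f i ℓ (q i t) j := Finset.sum_comm
        _ = ∑ ℓ, α i ℓ := by
            refine Finset.sum_congr rfl fun ℓ _ => ?_
            rw [← Finset.mul_sum, (hf i ℓ (q i t)).1.2, mul_one]
        _ = 1 := hα1 i
  -- payoff at the fully mixed NE is a constant vector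
  have hval : ∀ i j, payoff (n := fun i => n i + 1) A xstar i j
      = dot (xstar i) (payoff (n := fun i => n i + 1) A xstar i) := by
    intro i
    have hle : ∀ j, payoff (n := fun i => n i + 1) A xstar i j
        ≤ dot (xstar i) (payoff (n := fun i => n i + 1) A xstar i) := by
      intro j
      have := hNE i (single (n i + 1) j) (single_mem _ j)
      rwa [single_dot] at this
    set p := payoff (n := fun i => n i + 1) A xstar i with hp
    set v := dot (xstar i) p with hv
    have hsum : ∑ j, xstar i j * (v - p j) = 0 := by
      have h1 : ∑ j, xstar i j * v = v := by rw [← Finset.sum_mul, (hxs i).2, one_mul]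
      have h2 : ∑ j, xstar i j * p j = v := rfl
      simp only [mul_sub, Finset.sum_sub_distrib, h1, h2, sub_self]
    have hall := (Finset.sum_eq_zero_iff_of_nonneg (fun j _ =>
      mul_nonneg (hfull i j).le (sub_nonneg.2 (hle j)))).1 hsum
    intro j
    have hj := hall j (Finset.mem_univ j)
    rcases mul_eq_zero.1 hj with h' | h'
    · exact absurd h' (ne_of_gt (hfull i j))
    · have := sub_eq_zero.1 h'
      linarith
  -- the zero-sum identity
  have hid : ∀ (y : (k' : Fin m) → Fin (n k' + 1) → ℝ),
      (∀ i, y i ∈ simplex (n i + 1)) →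
      ∑ i, dot (y i - xstar i) (payoff (n := fun i => n i + 1) A y i) = 0 := by
    intro y hy
    set u : (i : Fin m) → Fin (n i + 1) → ℝ := fun i => y i - xstar i with hu
    have huj : ∀ i j, u i j = y i j - xstar i j := fun i j => rfl
    have husum : ∀ i, ∑ j, u i j = 0 := by
      intro i
      simp only [huj]
      rw [Finset.sum_sub_distrib, (hy i).2, (hxs i).2, sub_self]
    set T : Fin m → Fin m → ℝ := fun i k' => ∑ j, ∑ l, u i j * (A i k' j l * u k' l) with hT
    have hTe : ∀ i k', T i k' = ∑ j, ∑ l, u i j * (A i k' j l * u k' l) := fun _ _ => rfl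
    have hTanti : ∀ i k', i ≠ k' → T i k' + T k' i = 0 := by
      intro i k' hik
      have e1 : T k' i = ∑ j, ∑ l, u i j * (A k' i l j * u k' l) := by
        rw [hTe, Finset.sum_comm]
        exact Finset.sum_congr rfl fun j _ => Finset.sum_congr rfl fun l _ => by ring
      have e2 : T i k' + T k' i = ∑ j, ∑ l, (u i j * u k' l) * c i k' := by
        rw [hTe, e1, ← Finset.sum_add_distrib]
        refine Finset.sum_congr rfl fun j _ => ?_
        rw [← Finset.sum_add_distrib]
        refine Finset.sum_congr rfl fun l _ => ?_
        have hc := hconst i k' hik j l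
        calc u i j * (A i k' j l * u k' l) + u i j * (A k' i l j * u k' l)
            = (u i j * u k' l) * (A i k' j l + A k' i l j) := by ring
          _ = (u i j * u k' l) * c i k' := by rw [hc]
      rw [e2]
      refine Finset.sum_eq_zero fun j _ => ?_
      calc ∑ l, (u i j * u k' l) * c i k'
          = ∑ l, (u i j * c i k') * u k' l := Finset.sum_congr rfl fun l _ => by ring
        _ = (u i j * c i k') * ∑ l, u k' l := (Finset.mul_sum _ _ _).symm
        _ = 0 := by rw [husum k', mul_zero]
    have hz : ∀ i, dot (u i) (payoff (n := fun i => n i + 1) A xstar i) = 0 := by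
      intro i
      have e3 : dot (u i) (payoff (n := fun i => n i + 1) A xstar i)
          = ∑ j, u i j * dot (xstar i) (payoff (n := fun i => n i + 1) A xstar i) := by
        refine Finset.sum_congr rfl fun j _ => ?_
        rw [hval i j]
      rw [e3, ← Finset.sum_mul, husum i, zero_mul]
    have hdec : ∀ i, dot (u i) (payoff (n := fun i => n i + 1) A y i)
        = dot (u i) (payoff (n := fun i => n i + 1) A xstar i)
          + ∑ k' ∈ Finset.univ.erase i, T i k' := by
      intro i
      have hpayj : ∀ j, payoff (n := fun i => n i + 1) A y i j
          = payoff (n := fun i => n i + 1) A xstar i j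
            + ∑ k' ∈ Finset.univ.erase i, ∑ l, A i k' j l * u k' l := by
        intro j
        simp only [payoff, Finset.sum_apply, Matrix.mulVec, dotProduct]
        rw [← Finset.sum_add_distrib]
        refine Finset.sum_congr rfl fun k' _ => ?_
        rw [← Finset.sum_add_distrib]
        refine Finset.sum_congr rfl fun l _ => ?_
        rw [huj]; ring
      calc dot (u i) (payoff (n := fun i => n i + 1) A y i)
          = ∑ j, u i j * payoff (n := fun i => n i + 1) A y i j := rfl
        _ = ∑ j, (u i j * payoff (n := fun i => n i + 1) A xstar i j
              + ∑ k' ∈ Finset.univ.erase i, ∑ l, u i j * (A i k' j l * u k' l)) := by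
            refine Finset.sum_congr rfl fun j _ => ?_
            rw [hpayj j, mul_add, Finset.mul_sum]
            congr 1
            refine Finset.sum_congr rfl fun k' _ => ?_
            rw [Finset.mul_sum]
        _ = (∑ j, u i j * payoff (n := fun i => n i + 1) A xstar i j)
            + ∑ j, ∑ k' ∈ Finset.univ.erase i, ∑ l, u i j * (A i k' j l * u k' l) :=
            Finset.sum_add_distrib
        _ = dot (u i) (payoff (n := fun i => n i + 1) A xstar i)
            + ∑ k' ∈ Finset.univ.erase i, T i k' := by
            rw [Finset.sum_comm]
            rfl
    show ∑ i, dot (u i) (payoff (n := fun i => n i + 1) A y i) = 0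
    have e4 : ∑ i, dot (u i) (payoff (n := fun i => n i + 1) A y i)
        = ∑ i, ∑ k' ∈ Finset.univ.erase i, T i k' := by
      refine Finset.sum_congr rfl fun i _ => ?_
      rw [hdec i, hz i, zero_add]
    rw [e4]
    set T' : Fin m → Fin m → ℝ := fun i k' => if i = k' then 0 else T i k' with hT'
    have hT'e : ∀ i k', T' i k' = if i = k' then 0 else T i k' := fun _ _ => rfl
    have step1 : ∀ i, ∑ k' ∈ Finset.univ.erase i, T i k' = ∑ k', T' i k' := by
      intro i
      have e5 : ∑ k' ∈ Finset.univ.erase i, T i k' = ∑ k' ∈ Finset.univ.erase i, T' i k' := by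
        refine Finset.sum_congr rfl fun k' hk' => ?_
        rw [hT'e, if_neg (Ne.symm (Finset.ne_of_mem_erase hk'))]
      rw [e5]
      exact Finset.sum_erase _ (by rw [hT'e, if_pos rfl])
    have hanti' : ∀ i k', T' i k' = - T' k' i := by
      intro i k'
      by_cases hik : i = k'
      · subst hik; simp [hT'e]
      · rw [hT'e, hT'e, if_neg hik, if_neg (Ne.symm hik)]
        have := hTanti i k' hik
        linarith
    have hS : ∑ i, ∑ k', T' i k' = 0 := by
      have e6 : ∑ i : Fin m, ∑ k' : Fin m, T' i k' = - ∑ i : Fin m, ∑ k' : Fin m, T' i k' := by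
        conv_lhs => rw [Finset.sum_comm]
        calc ∑ k' : Fin m, ∑ i : Fin m, T' i k'
            = ∑ k' : Fin m, ∑ i : Fin m, -(T' k' i) :=
              Finset.sum_congr rfl fun k' _ => Finset.sum_congr rfl fun i _ => hanti' i k'
          _ = - ∑ k' : Fin m, ∑ i : Fin m, T' k' i := by simp
      linarith
    calc ∑ i, ∑ k' ∈ Finset.univ.erase i, T i k' = ∑ i, ∑ k', T' i k' :=
        Finset.sum_congr rfl fun i _ => step1 i
      _ = 0 := hS
  -- the aggregate regularized payoff
  set Φ : (i : Fin m) → (Fin (n i + 1) → ℝ) → ℝ :=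
    fun i a => ∑ ℓ, α i ℓ * (dot a (f i ℓ a) - h i ℓ (f i ℓ a)) with hΦdef
  set F : ℝ → ℝ := fun t => ∑ i, (Φ i (q i t) - dot (xstar i) (q i t)) with hFdef
  -- Fenchel sandwich
  have hsand : ∀ (i : Fin m) (a b : Fin (n i + 1) → ℝ),
      dot (a - b) (∑ ℓ, α i ℓ • f i ℓ b) ≤ Φ i a - Φ i b := by
    intro i a b
    rw [dot_sum_smul_right]
    have e : Φ i a - Φ i b = ∑ ℓ, α i ℓ * ((dot a (f i ℓ a) - h i ℓ (f i ℓ a))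
        - (dot b (f i ℓ b) - h i ℓ (f i ℓ b))) := by
      rw [← Finset.sum_sub_distrib]
      exact Finset.sum_congr rfl fun ℓ _ => by ring
    rw [e]
    refine Finset.sum_le_sum fun ℓ _ => ?_
    refine mul_le_mul_of_nonneg_left ?_ (hα i ℓ).le
    have h1 := (hf i ℓ a).2 (f i ℓ b) (hf i ℓ b).1
    have h2 : dot (a - b) (f i ℓ b) = dot a (f i ℓ b) - dot b (f i ℓ b) :=
      dot_sub_left _ _ _
    linarith
  -- integral representation of q-differences paired with a fixed vector
  have hdotint : ∀ (i : Fin m) (s t : ℝ), 0 ≤ s → 0 ≤ t →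
      ∀ w : Fin (n i + 1) → ℝ,
      dot (q i s - q i t) w = ∫ τ in t..s, dot (P i τ) w := by
    intro i s t hs ht w
    have hqdiff : q i s - q i t = ∫ τ in t..s, P i τ := by
      rw [hq i s hs, hq i t ht]
      show q i 0 + (∫ τ in (0:ℝ)..s, P i τ) - (q i 0 + ∫ τ in (0:ℝ)..t, P i τ)
          = ∫ τ in t..s, P i τ
      have e : q i 0 + (∫ τ in (0:ℝ)..s, P i τ) - (q i 0 + ∫ τ in (0:ℝ)..t, P i τ)
          = (∫ τ in (0:ℝ)..s, P i τ) - ∫ τ in (0:ℝ)..t, P i τ := by abel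
      rw [e]
      exact intervalIntegral.integral_interval_sub_left (hPint i 0 s) (hPint i 0 t)
    have hcompj : ∀ j, q i s j - q i t j = ∫ τ in t..s, P i τ j := by
      intro j
      have h1 := congrFun hqdiff j
      rw [Pi.sub_apply] at h1
      rw [h1]
      exact ((ContinuousLinearMap.proj (R := ℝ) (φ := fun _ : Fin (n i + 1) => ℝ)
        j).intervalIntegral_comp_comm (hPint i t s)).symm
    have first : dot (q i s - q i t) w = ∑ j, (q i s j - q i t j) * w j := by
      refine Finset.sum_congr rfl fun j _ => ?_
      rw [Pi.sub_apply]
    calc dot (q i s - q i t) w = ∑ j, (q i s j - q i t j) * w j := first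
      _ = ∑ j, ∫ τ in t..s, P i τ j * w j := by
        refine Finset.sum_congr rfl fun j _ => ?_
        rw [hcompj j, ← intervalIntegral.integral_mul_const]
      _ = ∫ τ in t..s, ∑ j, P i τ j * w j := by
        refine (intervalIntegral.integral_finset_sum fun j _ => ?_).symm
        exact (((continuous_apply j).comp (hPc i)).mul continuous_const).intervalIntegrable _ _
      _ = ∫ τ in t..s, dot (P i τ) w := rfl
  -- the two-variable function controlling increments of F
  set G : ℝ × ℝ → ℝ :=
    fun pr => ∑ i, dot (P i pr.1) (x i pr.2 - xstar i) with hGdef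
  have hGc : Continuous G := by
    have e : G = fun pr : ℝ × ℝ => ∑ i, ∑ j, P i pr.1 j * (x i pr.2 j - xstar i j) := by
      funext pr
      exact Finset.sum_congr rfl fun i _ => Finset.sum_congr rfl fun j _ => by
        rw [Pi.sub_apply]
    rw [e]
    refine continuous_finset_sum _ fun i _ => continuous_finset_sum _ fun j _ => ?_
    refine Continuous.mul ?_ (Continuous.sub ?_ continuous_const)
    · exact ((continuous_apply j).comp (hPc i)).comp continuous_fst
    · exact ((continuous_apply j).comp (hxc i)).comp continuous_snd
  have hG0 : ∀ t : ℝ, 0 ≤ t → G (t, t) = 0 := by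
    intro t ht
    have hy := hid (fun k' => x k' t) (fun i => hxmem t ht i)
    calc G (t, t) = ∑ i, dot ((fun k' => x k' t) i - xstar i)
          (payoff (n := fun i => n i + 1) A (fun k' => x k' t) i) :=
        Finset.sum_congr rfl fun i _ => by rw [dot_comm]
      _ = 0 := hy
  -- continuity of F
  have hΦqc : ∀ i, Continuous fun t => Φ i (q i t) := by
    intro i
    have e : (fun t => Φ i (q i t))
        = fun t => ∑ ℓ, α i ℓ * ((fun a => dot a (f i ℓ a) - h i ℓ (f i ℓ a)) (q i t)) := rfl
    rw [e]
    refine continuous_finset_sum _ fun ℓ _ => Continuous.mul continuous_const ?_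
    have hlip : LipschitzWith ((n i + 1 : ℕ) : NNReal)
        (fun a : Fin (n i + 1) → ℝ => dot a (f i ℓ a) - h i ℓ (f i ℓ a)) := by
      apply LipschitzWith.of_dist_le_mul
      intro a b
      rw [Real.dist_eq]
      have h1 := (hf i ℓ a).2 (f i ℓ b) (hf i ℓ b).1
      have h2 := (hf i ℓ b).2 (f i ℓ a) (hf i ℓ a).1
      have e1 : dot (a - b) (f i ℓ b) = dot a (f i ℓ b) - dot b (f i ℓ b) :=
        dot_sub_left _ _ _
      have e2 : dot (a - b) (f i ℓ a) = dot a (f i ℓ a) - dot b (f i ℓ a) :=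
        dot_sub_left _ _ _
      have b1 := abs_dot_le (a - b) (f i ℓ b) (hf i ℓ b).1
      have b2 := abs_dot_le (a - b) (f i ℓ a) (hf i ℓ a).1
      have hsb : ∑ j, |(a - b) j| ≤ (n i + 1 : ℕ) * dist a b := by
        have s1 : ∑ j, |(a - b) j| ≤ ∑ _j : Fin (n i + 1), dist a b := by
          refine Finset.sum_le_sum fun j _ => ?_
          rw [Pi.sub_apply, ← Real.dist_eq]
          exact dist_le_pi_dist a b j
        have s2 : ∑ _j : Fin (n i + 1), dist a b = (n i + 1 : ℕ) * dist a b := by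
          rw [Finset.sum_const, Finset.card_univ, Fintype.card_fin, nsmul_eq_mul]
        linarith
      have hK : (((n i + 1 : ℕ) : NNReal) : ℝ) = ((n i + 1 : ℕ) : ℝ) := by simp
      rw [hK]
      have hb1 : |dot (a - b) (f i ℓ b)| ≤ (n i + 1 : ℕ) * dist a b := b1.trans hsb
      have hb2 : |dot (a - b) (f i ℓ a)| ≤ (n i + 1 : ℕ) * dist a b := b2.trans hsb
      rw [abs_le]
      constructor
      · have h3 := neg_abs_le (dot (a - b) (f i ℓ b))
        linarith
      · have h4 := le_abs_self (dot (a - b) (f i ℓ a))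
        linarith
    exact hlip.continuous.comp (hqc i)
  have hFcont : Continuous F := by
    have e : F = fun t => ∑ i, (Φ i (q i t) - ∑ j, xstar i j * q i t j) := rfl
    rw [e]
    refine continuous_finset_sum _ fun i _ => Continuous.sub (hΦqc i) ?_
    exact continuous_finset_sum _ fun j _ =>
      continuous_const.mul ((continuous_apply j).comp (hqc i))
  -- F has vanishing right derivative
  have hderiv : ∀ t : ℝ, 0 ≤ t → HasDerivWithinAt F 0 (Set.Ici t) t := by
    intro t ht
    rw [hasDerivWithinAt_iff_tendsto_slope, Set.Ici_sdiff_left]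
    rw [Metric.tendsto_nhdsWithin_nhds]
    intro ε hε
    obtain ⟨δ, hδpos, hδG⟩ := Metric.continuousAt_iff.1
      (hGc.continuousAt : ContinuousAt G (t, t)) (ε/2) (by linarith)
    refine ⟨δ, hδpos, ?_⟩
    intro s hs hdist
    have hst : t < s := hs
    have hs0 : 0 ≤ s := le_trans ht hst.le
    rw [Real.dist_eq] at hdist
    have hsδ : s - t < δ := by rwa [abs_of_pos (sub_pos.2 hst)] at hdist
    have hGbound : ∀ τ u : ℝ, |τ - t| < δ → |u - t| < δ → |G (τ, u)| < ε/2 := by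
      intro τ u h1 h2
      have hd : dist ((τ, u) : ℝ × ℝ) ((t, t) : ℝ × ℝ) < δ := by
        rw [Prod.dist_eq]
        exact max_lt (by rwa [Real.dist_eq]) (by rwa [Real.dist_eq])
      have h3 := hδG hd
      rwa [Real.dist_eq, hG0 t ht, sub_zero] at h3
    have hkeyint : ∀ u : ℝ, 0 ≤ u →
        ∑ i, dot (q i s - q i t) (x i u - xstar i) = ∫ τ in t..s, G (τ, u) := by
      intro u hu
      have hcd : ∀ i : Fin m, Continuous fun τ => dot (P i τ) (x i u - xstar i) := by
        intro i
        have e2 : (fun τ => dot (P i τ) (x i u - xstar i))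
            = fun τ => ∑ j, P i τ j * (x i u - xstar i) j := rfl
        rw [e2]
        exact continuous_finset_sum _ fun j _ =>
          ((continuous_apply j).comp (hPc i)).mul continuous_const
      calc ∑ i, dot (q i s - q i t) (x i u - xstar i)
          = ∑ i, ∫ τ in t..s, dot (P i τ) (x i u - xstar i) :=
            Finset.sum_congr rfl fun i _ => hdotint i s t hs0 ht _
        _ = ∫ τ in t..s, ∑ i, dot (P i τ) (x i u - xstar i) :=
            (intervalIntegral.integral_finset_sum fun i _ =>
              (hcd i).intervalIntegrable _ _).symm
        _ = ∫ τ in t..s, G (τ, u) := rfl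
    have hlow : ∑ i, dot (q i s - q i t) (x i t - xstar i) ≤ F s - F t := by
      have e : F s - F t = ∑ i, ((Φ i (q i s) - dot (xstar i) (q i s))
          - (Φ i (q i t) - dot (xstar i) (q i t))) := by
        rw [← Finset.sum_sub_distrib]
      rw [e]
      refine Finset.sum_le_sum fun i _ => ?_
      have h1 := hsand i (q i s) (q i t)
      rw [← hx i t ht] at h1
      have h2 : dot (q i s - q i t) (x i t - xstar i)
          = dot (q i s - q i t) (x i t) - dot (q i s - q i t) (xstar i) :=
        dot_sub_right _ _ _
      have h3 : dot (q i s - q i t) (xstar i)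
          = dot (xstar i) (q i s) - dot (xstar i) (q i t) := by
        rw [dot_sub_left, dot_comm (q i s), dot_comm (q i t)]
      linarith
    have hup : F s - F t ≤ ∑ i, dot (q i s - q i t) (x i s - xstar i) := by
      have e : F s - F t = ∑ i, ((Φ i (q i s) - dot (xstar i) (q i s))
          - (Φ i (q i t) - dot (xstar i) (q i t))) := by
        rw [← Finset.sum_sub_distrib]
      rw [e]
      refine Finset.sum_le_sum fun i _ => ?_
      have h1 := hsand i (q i t) (q i s)
      rw [← hx i s hs0] at h1
      have h2 : dot (q i s - q i t) (x i s - xstar i)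
          = dot (q i s - q i t) (x i s) - dot (q i s - q i t) (xstar i) :=
        dot_sub_right _ _ _
      have h3 : dot (q i s - q i t) (xstar i)
          = dot (xstar i) (q i s) - dot (xstar i) (q i t) := by
        rw [dot_sub_left, dot_comm (q i s), dot_comm (q i t)]
      have h4 : dot (q i t - q i s) (x i s)
          = dot (q i t) (x i s) - dot (q i s) (x i s) := dot_sub_left _ _ _
      have h5 : dot (q i s - q i t) (x i s)
          = dot (q i s) (x i s) - dot (q i t) (x i s) := dot_sub_left _ _ _
      linarith
    have hIb : ∀ u : ℝ, |u - t| < δ → |∫ τ in t..s, G (τ, u)| ≤ ε/2 * (s - t) := by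
      intro u hu
      have hbnd : ∀ τ ∈ Set.uIoc t s, ‖G (τ, u)‖ ≤ ε/2 := by
        intro τ hτ
        rw [Set.uIoc_of_le hst.le] at hτ
        rw [Real.norm_eq_abs]
        have h1 : |τ - t| < δ := by
          rw [abs_of_pos (sub_pos.2 hτ.1)]
          linarith [hτ.2, hsδ]
        exact (hGbound τ u h1 hu).le
      have hb := intervalIntegral.norm_integral_le_of_norm_le_const (C := ε/2) hbnd
      rwa [Real.norm_eq_abs, abs_of_pos (sub_pos.2 hst)] at hb
    have hAbs : |F s - F t| ≤ ε/2 * (s - t) := by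
      have hl := hkeyint t ht
      have hu' := hkeyint s hs0
      have hIl := hIb t (by simpa using hδpos)
      have hIu := hIb s hdist
      rw [abs_le]
      constructor
      · have h6 := (abs_le.1 hIl).1
        linarith [hlow, hl]
      · have h7 := (abs_le.1 hIu).2
        linarith [hup, hu']
    have hslope : |slope F t s| ≤ ε/2 := by
      rw [slope_def_field, abs_div, abs_of_pos (sub_pos.2 hst),
        div_le_iff₀ (sub_pos.2 hst)]
      linarith [hAbs]
    rw [dist_zero_right, Real.norm_eq_abs]
    linarith [hslope, hε]
  -- F is constant
  have hFconst : ∀ t : ℝ, 0 ≤ t → F t = F 0 := by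
    intro t ht
    exact constant_of_has_deriv_right_zero (hFcont.continuousOn)
      (fun y hy => hderiv y hy.1) t ⟨ht, le_refl t⟩
  -- constants for the coercivity bound
  have hne : ∀ i : Fin m, (Finset.univ : Finset (Fin (n i + 1))).Nonempty :=
    fun i => Finset.univ_nonempty
  set Bc : Fin m → ℝ :=
    fun i => Finset.univ.sup' (hne i)
      (fun j => ∑ ℓ, α i ℓ * h i ℓ (single (n i + 1) j)) with hBc
  set ee : Fin m → ℝ := fun i => Finset.univ.inf' (hne i) (xstar i) with hee
  have heepos : ∀ i, 0 < ee i := by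
    intro i
    obtain ⟨j, _, hje⟩ := Finset.exists_mem_eq_inf' (hne i) (xstar i)
    have e1 : ee i = Finset.univ.inf' (hne i) (xstar i) := rfl
    rw [e1, hje]; exact hfull i j
  -- per-agent coercivity
  have hkey : ∀ (t : ℝ), 0 ≤ t → ∀ i,
      ee i * (Finset.univ.sup' (hne i) (q i t) - Finset.univ.inf' (hne i) (q i t))
        - Bc i ≤ Φ i (q i t) - dot (xstar i) (q i t) := by
    intro t ht i
    obtain ⟨jM, _, hjM⟩ := Finset.exists_mem_eq_sup' (hne i) (q i t)
    obtain ⟨jm, _, hjm⟩ := Finset.exists_mem_eq_inf' (hne i) (q i t)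
    set Mx := Finset.univ.sup' (hne i) (q i t) with hMx
    set mn := Finset.univ.inf' (hne i) (q i t) with hmn
    have ha : Mx - Bc i ≤ Φ i (q i t) := by
      have h1 : ∀ ℓ, q i t jM - h i ℓ (single (n i + 1) jM)
          ≤ dot (q i t) (f i ℓ (q i t)) - h i ℓ (f i ℓ (q i t)) := by
        intro ℓ
        have := (hf i ℓ (q i t)).2 (single (n i + 1) jM) (single_mem _ jM)
        rwa [dot_single] at this
      have h2 : ∑ ℓ, α i ℓ * (q i t jM - h i ℓ (single (n i + 1) jM))
          ≤ Φ i (q i t) :=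
        Finset.sum_le_sum fun ℓ _ => mul_le_mul_of_nonneg_left (h1 ℓ) (hα i ℓ).le
      have h3 : ∑ ℓ, α i ℓ * (q i t jM - h i ℓ (single (n i + 1) jM))
          = q i t jM - ∑ ℓ, α i ℓ * h i ℓ (single (n i + 1) jM) := by
        simp only [mul_sub]
        rw [Finset.sum_sub_distrib, ← Finset.sum_mul, hα1 i, one_mul]
      have h4 : ∑ ℓ, α i ℓ * h i ℓ (single (n i + 1) jM) ≤ Bc i :=
        Finset.le_sup' (f := fun j => ∑ ℓ, α i ℓ * h i ℓ (single (n i + 1) j))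
          (Finset.mem_univ jM)
      rw [hjM]
      linarith
    have hb : dot (xstar i) (q i t) ≤ Mx - ee i * (Mx - mn) := by
      have hsplit : dot (xstar i) (q i t)
          = xstar i jm * q i t jm + ∑ j ∈ Finset.univ.erase jm, xstar i j * q i t j :=
        (Finset.add_sum_erase _ _ (Finset.mem_univ jm)).symm
      have hrest : ∑ j ∈ Finset.univ.erase jm, xstar i j * q i t j
          ≤ (1 - xstar i jm) * Mx := by
        have h5 : ∑ j ∈ Finset.univ.erase jm, xstar i j * q i t j
            ≤ ∑ j ∈ Finset.univ.erase jm, xstar i j * Mx := by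
          refine Finset.sum_le_sum fun j _ => ?_
          exact mul_le_mul_of_nonneg_left (Finset.le_sup' _ (Finset.mem_univ j))
            (hfull i j).le
        have h7 := Finset.add_sum_erase Finset.univ (xstar i) (Finset.mem_univ jm)
        rw [(hxs i).2] at h7
        have h6 : ∑ j ∈ Finset.univ.erase jm, xstar i j = 1 - xstar i jm := by
          linarith
        calc ∑ j ∈ Finset.univ.erase jm, xstar i j * q i t j
            ≤ ∑ j ∈ Finset.univ.erase jm, xstar i j * Mx := h5
          _ = (∑ j ∈ Finset.univ.erase jm, xstar i j) * Mx := (Finset.sum_mul _ _ _).symm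
          _ = (1 - xstar i jm) * Mx := by rw [h6]
      have h9 : ee i ≤ xstar i jm := Finset.inf'_le _ (Finset.mem_univ jm)
      have h10 : xstar i jm * q i t jm = xstar i jm * mn := by rw [hjm]
      have hMm : mn ≤ Mx := by
        rw [hjm]
        exact Finset.le_sup' _ (Finset.mem_univ jm)
      have h11 : ee i * (Mx - mn) ≤ xstar i jm * (Mx - mn) :=
        mul_le_mul_of_nonneg_right h9 (by linarith)
      nlinarith [hsplit, hrest, h10, h11]
    linarith [ha, hb]
  have hoscnn : ∀ (t : ℝ) (i : Fin m),
      0 ≤ Finset.univ.sup' (hne i) (q i t) - Finset.univ.inf' (hne i) (q i t) := by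
    intro t i
    obtain ⟨j0, hj0⟩ := hne i
    have h1 : Finset.univ.inf' (hne i) (q i t) ≤ q i t j0 := Finset.inf'_le _ hj0
    have h2 : q i t j0 ≤ Finset.univ.sup' (hne i) (q i t) := Finset.le_sup' _ hj0
    linarith
  set E : ℝ := F 0 + 2 * ∑ k', |Bc k'| with hE
  have hosc : ∀ (t : ℝ), 0 ≤ t → ∀ i,
      ee i * (Finset.univ.sup' (hne i) (q i t) - Finset.univ.inf' (hne i) (q i t)) ≤ E := by
    intro t ht i
    have hsum : ∑ k', (Φ k' (q k' t) - dot (xstar k') (q k' t)) = F 0 := by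
      rw [← hFconst t ht]
    have h1 : Φ i (q i t) - dot (xstar i) (q i t)
        = F 0 - ∑ k' ∈ Finset.univ.erase i, (Φ k' (q k' t) - dot (xstar k') (q k' t)) := by
      rw [← hsum, ← Finset.add_sum_erase _ _ (Finset.mem_univ i)]
      ring
    have h2 : ∀ k', -Bc k' ≤ Φ k' (q k' t) - dot (xstar k') (q k' t) := by
      intro k'
      have h3 := hkey t ht k'
      have h4 : 0 ≤ ee k' * (Finset.univ.sup' (hne k') (q k' t)
          - Finset.univ.inf' (hne k') (q k' t)) :=
        mul_nonneg (heepos k').le (hoscnn t k')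
      linarith
    have h5 : ∑ k' ∈ Finset.univ.erase i, (-Bc k')
        ≤ ∑ k' ∈ Finset.univ.erase i, (Φ k' (q k' t) - dot (xstar k') (q k' t)) :=
      Finset.sum_le_sum fun k' _ => h2 k'
    have h6 : ∑ k' ∈ Finset.univ.erase i, (-Bc k')
        = - ∑ k' ∈ Finset.univ.erase i, Bc k' := by simp
    have h7 : ∑ k' ∈ Finset.univ.erase i, Bc k' ≤ ∑ k', |Bc k'| :=
      le_trans (Finset.sum_le_sum fun k' _ => le_abs_self _)
        (Finset.sum_le_sum_of_subset_of_nonneg (Finset.erase_subset _ _)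
          (fun _ _ _ => abs_nonneg _))
    have h8 : Bc i ≤ ∑ k', |Bc k'| :=
      le_trans (le_abs_self _)
        (Finset.single_le_sum (f := fun k' => |Bc k'|) (fun _ _ => abs_nonneg _)
          (Finset.mem_univ i))
    have h9 := hkey t ht i
    have hEe : E = F 0 + 2 * ∑ k', |Bc k'| := hE
    linarith
  refine ⟨1 + ∑ i, Real.sqrt (n i) * max (E / ee i) 0, ?_, ?_⟩
  · have : 0 ≤ ∑ i, Real.sqrt (n i) * max (E / ee i) 0 :=
      Finset.sum_nonneg fun i _ => mul_nonneg (Real.sqrt_nonneg _) (le_max_right _ _)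
    linarith
  intro t ht i
  set Mx := Finset.univ.sup' (hne i) (q i t) with hMx
  set mn := Finset.univ.inf' (hne i) (q i t) with hmn
  have hoscnn' : 0 ≤ Mx - mn := hoscnn t i
  have hoscle : Mx - mn ≤ E / ee i := by
    rw [le_div_iff₀ (heepos i)]
    have := hosc t ht i
    linarith [mul_comm (ee i) (Mx - mn)]
  have hstep : ∑ j : Fin (n i), (q i t j.castSucc - q i t (Fin.last (n i))) ^ 2
      ≤ (n i : ℝ) * (Mx - mn) ^ 2 := by
    calc ∑ j : Fin (n i), (q i t j.castSucc - q i t (Fin.last (n i))) ^ 2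
        ≤ ∑ _j : Fin (n i), (Mx - mn) ^ 2 := by
          refine Finset.sum_le_sum fun j _ => ?_
          have hu1 : q i t j.castSucc ≤ Mx := Finset.le_sup' _ (Finset.mem_univ _)
          have hu2 : mn ≤ q i t j.castSucc := Finset.inf'_le _ (Finset.mem_univ _)
          have hu3 : q i t (Fin.last (n i)) ≤ Mx := Finset.le_sup' _ (Finset.mem_univ _)
          have hu4 : mn ≤ q i t (Fin.last (n i)) := Finset.inf'_le _ (Finset.mem_univ _)
          refine sq_le_sq' ?_ ?_ <;> linarith
      _ = (n i : ℝ) * (Mx - mn) ^ 2 := by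
          rw [Finset.sum_const, Finset.card_univ, Fintype.card_fin, nsmul_eq_mul]
  have hfin : Real.sqrt (∑ j : Fin (n i), (q i t j.castSucc - q i t (Fin.last (n i))) ^ 2)
      ≤ Real.sqrt (n i) * (Mx - mn) := by
    refine (Real.sqrt_le_sqrt hstep).trans ?_
    rw [Real.sqrt_mul (Nat.cast_nonneg _), Real.sqrt_sq hoscnn']
  have h10 : Real.sqrt (n i) * (Mx - mn) ≤ Real.sqrt (n i) * max (E / ee i) 0 :=
    mul_le_mul_of_nonneg_left (hoscle.trans (le_max_left _ _)) (Real.sqrt_nonneg _)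
  have h11 : Real.sqrt (n i) * max (E / ee i) 0
      ≤ ∑ i', Real.sqrt (n i') * max (E / ee i') 0 :=
    Finset.single_le_sum (f := fun i' => Real.sqrt (n i') * max (E / ee i') 0)
      (fun i' _ => mul_nonneg (Real.sqrt_nonneg _) (le_max_right _ _))
      (Finset.mem_univ i)
  linarith [hfin, h10, h11]
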